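/- arXiv:1711.08258 — 2 statements merged into one kernel-verified Lean document; each statement's English description precedes it below -/
import Mathlib

section
/- Let F = (I, H) be a support fabric, U ⊆ H a downward-closed (open) subset, and J ∈ U a nonempty stratum. Then π_J(F|_U) = π_J(F)|_{U'}, where U' = (π_J^#)^{-1}(U) and F|_U = (I, U) denotes the restriction of F to U. -/
open scoped Pointwise

namespace RedSing

/-! ### Vectors and polyhedra.
A vector "in `ℝ^J`" is a function `ℕ → ℝ` supported on the finite set `J`. -/

abbrev Vec : Type := ℕ → ℝ

/-- The cone `ℝ_{≥0}^J` of nonnegative vectors supported on `J`. -/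
def suppCone (J : Finset ℕ) : Set Vec :=
  {σ | (∀ j, 0 ≤ σ j) ∧ ∀ j, j ∉ J → σ j = 0}

/-- Positive convex hull `[[A]] = convexHull (A + ℝ_{≥0}^J)`. -/
noncomputable def posHull (J : Finset ℕ) (A : Set Vec) : Set Vec :=
  convexHull ℝ (A + suppCone J)

/-- The lattice points `(1/d)·ℤ_{≥0}^J`. -/
def latticePts (J : Finset ℕ) (d : ℕ) : Set Vec :=
  {σ | σ ∈ suppCone J ∧ ∀ j, ∃ m : ℕ, σ j = (m : ℝ) / (d : ℝ)}

/-- `Δ ⊆ ℝ_{≥0}^J` is a characteristic polyhedron with denominator `d`. -/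
def IsCharPoly (J : Finset ℕ) (d : ℕ) (Δ : Set Vec) : Prop :=
  ∃ A, A ⊆ latticePts J d ∧ Δ = posHull J A

/-! ### Support fabrics -/

/-- A support fabric: a nonempty finite index set `I` together with a
downward-closed family `H` of subsets of `I` (the strata). -/
structure Fabric where
  I : Finset ℕ
  I_nonempty : I.Nonempty
  H : Set (Finset ℕ)
  mem_sub : ∀ J ∈ H, J ⊆ I
  downward : ∀ J ∈ H, ∀ J' ⊆ J, J' ∈ H

/-- Dimension of a support fabric: the maximal cardinality of a stratum. -/
noncomputable def Fabric.dim (F : Fabric) : ℕ :=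
  sSup {n | ∃ J ∈ F.H, J.card = n}

/-- The Zariski topology on finsets: the open sets are the downward-closed families;
subsets such as the strata set `H` carry the subspace topology. -/
instance zariskiTopology : TopologicalSpace (Finset ℕ) where
  IsOpen U := ∀ J ∈ U, ∀ J' ⊆ J, J' ∈ U
  isOpen_univ := fun J _ J' _ => Set.mem_univ J'
  isOpen_inter := fun s t hs ht J hJ J' hJ' => ⟨hs J hJ.1 J' hJ', ht J hJ.2 J' hJ'⟩
  isOpen_sUnion := fun S hS J hJ J' hJ' => by
    obtain ⟨t, htS, hJt⟩ := hJ
    exact ⟨t, htS, hS t htS J hJt J' hJ'⟩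

/-! ### Polyhedra systems -/

/-- A polyhedra system over a support fabric: a nonempty characteristic polyhedron
with denominator `d` for each stratum, compatible with the projections
(restriction of functions). -/
structure PolySys where
  F : Fabric
  d : ℕ
  d_pos : 0 < d
  Δ : Finset ℕ → Set Vec
  char : ∀ J ∈ F.H, IsCharPoly J d (Δ J)
  nonempty : ∀ J ∈ F.H, (Δ J).Nonempty
  compat : ∀ J₁ ∈ F.H, ∀ J₂ ∈ F.H, J₁ ⊆ J₂ →
    Δ J₁ = (fun σ => fun j => if j ∈ J₁ then σ j else 0) '' Δ J₂

/-- Contact exponent `δ(Δ) = min {|σ| : σ ∈ Δ}` (with the convention `δ = -1`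
for the empty index set). -/
noncomputable def contactExp (J : Finset ℕ) (Δ : Set Vec) : ℝ :=
  if J = (∅ : Finset ℕ) then -1 else sInf ((fun σ => ∑ j ∈ J, σ j) '' Δ)

/-- Singular locus: strata with contact exponent at least 1. -/
def Sing (D : PolySys) : Set (Finset ℕ) :=
  {J | J ∈ D.F.H ∧ 1 ≤ contactExp J (D.Δ J)}

/-- `D` is special: `δ(D) = max {δ(Δ_J)} = 1`. -/
def IsSpecial (D : PolySys) : Prop :=
  (∀ J ∈ D.F.H, contactExp J (D.Δ J) ≤ 1) ∧ ∃ J ∈ D.F.H, contactExp J (D.Δ J) = 1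

/-! ### Blow-ups and transforms -/

/-- The strata of the blow-up centered in `J`, with new index `inf` (playing `∞`). -/
def blowupH (H : Set (Finset ℕ)) (J : Finset ℕ) (inf : ℕ) : Set (Finset ℕ) :=
  {K | K ∈ H ∧ ¬ J ⊆ K} ∪
    {J' | ∃ K, (K ∈ H ∧ J ⊆ K) ∧ ∃ A, A ⊂ J ∧ J' = (K \ J) ∪ A ∪ {inf}}

/-- The map `π_J^#` from the strata of the blow-up to the strata of `F`. -/
def blowdown (J : Finset ℕ) (inf : ℕ) (J' : Finset ℕ) : Finset ℕ :=
  if inf ∈ J' then (J'.erase inf) ∪ J else J'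

/-- The map `λ_{J'} : ℝ^K → ℝ^{J'}`. -/
noncomputable def lamMap (J J' : Finset ℕ) (inf : ℕ) (σ : Vec) : Vec :=
  fun j => if j = inf then ∑ i ∈ J, σ i else if j ∈ J' then σ j else 0

/-- The indicator vector `e_{J',∞}` of the new index. -/
def eVec (inf : ℕ) : Vec := fun j => if j = inf then 1 else 0

/-- The polyhedron `Δ⁰_{J'}` of the total transform at a stratum `J'` of the blow-up. -/
noncomputable def totalΔ (D : PolySys) (J : Finset ℕ) (inf : ℕ) (J' : Finset ℕ) : Set Vec :=
  if inf ∈ J' then posHull J' (lamMap J J' inf '' D.Δ (blowdown J inf J'))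
  else D.Δ J'

/-- The polyhedron `Δ'_{J'} = Δ⁰_{J'} - e_{J',∞}` of the characteristic transform
(`e_{J',∞} = 0` when `∞ ∉ J'`). -/
noncomputable def charΔ (D : PolySys) (J : Finset ℕ) (inf : ℕ) (J' : Finset ℕ) : Set Vec :=
  if inf ∈ J' then
    (fun σ => σ - eVec inf) '' posHull J' (lamMap J J' inf '' D.Δ (blowdown J inf J'))
  else D.Δ J'

/-- `D'` is the total transform `Λ⁰_J(D)` of `D` centered in the nonempty stratum `J`,
with new index `inf`. -/
def IsTotalTransformAt (D D' : PolySys) (J : Finset ℕ) (inf : ℕ) : Prop :=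
  J ∈ D.F.H ∧ J ≠ ∅ ∧ D'.d = D.d ∧ inf ∉ D.F.I ∧
  D'.F.I = insert inf D.F.I ∧ D'.F.H = blowupH D.F.H J inf ∧
  ∀ J' ∈ D'.F.H, D'.Δ J' = totalΔ D J inf J'

/-- `D'` is a total transform of `D` centered in `J`. -/
def IsTotalTransform (D D' : PolySys) (J : Finset ℕ) : Prop :=
  ∃ inf, IsTotalTransformAt D D' J inf

/-- `D'` is the characteristic transform `Λ_J(D)` of `D` centered in the singular
stratum `J`, with new index `inf`. -/
def IsCharTransformAt (D D' : PolySys) (J : Finset ℕ) (inf : ℕ) : Prop :=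
  J ∈ Sing D ∧ D'.d = D.d ∧ inf ∉ D.F.I ∧
  D'.F.I = insert inf D.F.I ∧ D'.F.H = blowupH D.F.H J inf ∧
  ∀ J' ∈ D'.F.H, D'.Δ J' = charΔ D J inf J'

/-- `D'` is a characteristic transform of `D` centered in `J`. -/
def IsCharTransform (D D' : PolySys) (J : Finset ℕ) : Prop :=
  ∃ inf, IsCharTransformAt D D' J inf

/-- A reduction of singularities of `D`: a finite sequence of characteristic
transforms, each centered in a singular stratum of the previous system, ending
in a system with empty singular locus. -/
def HasReduction (D : PolySys) : Prop :=
  ∃ (k : ℕ) (seq : ℕ → PolySys), seq 0 = D ∧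
    (∀ i, i < k → ∃ J, IsCharTransform (seq i) (seq (i + 1)) J) ∧
    Sing (seq k) = ∅

/-! ### Strict tangent space and maximal contact -/

/-- Hironaka's strict tangent space `T(Δ)` of a polyhedron `Δ ⊆ ℝ_{≥0}^J`. -/
def strictTangent (J : Finset ℕ) (Δ : Set Vec) : Set ℕ :=
  {j | ∃ σ ∈ Δ, (∑ i ∈ J, σ i) = 1 ∧ σ j ≠ 0}

/-- The stratum `T` has maximal contact with the (special) system `D`. -/
def HasMaximalContact (D : PolySys) (T : Finset ℕ) : Prop :=
  T ∈ D.F.H ∧ ∀ J ∈ Sing D, (↑T : Set ℕ) ⊆ strictTangent J (D.Δ J)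

/-! ### Hironaka's projection from a stratum `T` -/

/-- Hironaka's projection `∇_J^T(σ) = σ|_{J∖T} / (1 - Σ_{j∈T} σ(j))`. -/
noncomputable def hironakaProj (T J : Finset ℕ) (σ : Vec) : Vec :=
  fun j => if j ∈ J \ T then σ j / (1 - ∑ i ∈ T, σ i) else 0

/-- The polyhedron `Δ^T_{J*} = ∇_J^T(Δ_J ∩ M_J^T)` of Hironaka's projection,
where `J = J* ∪ T`. -/
noncomputable def projΔ (D : PolySys) (T J' : Finset ℕ) : Set Vec :=
  hironakaProj T (J' ∪ T) '' {σ | σ ∈ D.Δ (J' ∪ T) ∧ (∑ i ∈ T, σ i) < 1}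

/-- The strata `H^T = {J ∖ T : T ⊆ J ∈ H}` of the projected fabric `F^T`. -/
def projH (F : Fabric) (T : Finset ℕ) : Set (Finset ℕ) :=
  {J' | ∃ J, (J ∈ F.H ∧ T ⊆ J) ∧ J' = J \ T}

/-- The singular locus of Hironaka's projection `D^T`. -/
def projSing (D : PolySys) (T : Finset ℕ) : Set (Finset ℕ) :=
  {J' | J' ∈ projH D.F T ∧ (projΔ D T J').Nonempty ∧ 1 ≤ contactExp J' (projΔ D T J')}

/-- `E` is Hironaka's projection `D^T` of `D` from the stratum `T`
(a polyhedra system over `F^T` with denominator `d!·d`). -/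
def IsHironakaProjection (D E : PolySys) (T : Finset ℕ) : Prop :=
  E.F.I = D.F.I \ T ∧ E.F.H = projH D.F T ∧ E.d = Nat.factorial D.d * D.d ∧
  ∀ J' ∈ E.F.H, E.Δ J' = projΔ D T J'

/-! ### Reduction `Red_C` of a system to a closed set `C` of strata -/

/-- The fabric `Red_C(F)`, with strata `H_C = ⋃_{J ∈ C} P(J)`. -/
def Fabric.red (F : Fabric) (C : Set (Finset ℕ)) : Fabric where
  I := F.I
  I_nonempty := F.I_nonempty
  H := {J' | ∃ J, (J ∈ C ∧ J ∈ F.H) ∧ J' ⊆ J}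
  mem_sub := by
    rintro J' ⟨J, ⟨_, hJH⟩, hsub⟩
    exact hsub.trans (F.mem_sub J hJH)
  downward := by
    rintro J' ⟨J, hJ, hsub⟩ J'' hsub'
    exact ⟨J, hJ, hsub'.trans hsub⟩

/-- The reduction `Red_C(D)` of a polyhedra system to a closed set `C ⊆ H`. -/
noncomputable def PolySys.red (D : PolySys) (C : Set (Finset ℕ)) : PolySys where
  F := D.F.red C
  d := D.d
  d_pos := D.d_pos
  Δ := D.Δ
  char := by
    rintro J ⟨K, ⟨_, hK⟩, hsub⟩
    exact D.char J (D.F.downward K hK J hsub)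
  nonempty := by
    rintro J ⟨K, ⟨_, hK⟩, hsub⟩
    exact D.nonempty J (D.F.downward K hK J hsub)
  compat := by
    rintro J₁ ⟨K₁, ⟨_, hK₁⟩, h₁⟩ J₂ ⟨K₂, ⟨_, hK₂⟩, h₂⟩ h12
    exact D.compat J₁ (D.F.downward K₁ hK₁ J₁ h₁) J₂ (D.F.downward K₂ hK₂ J₂ h₂) h12

/-- A special polyhedra system is consistent if for each connected component `C`
of its singular locus there is a stratum having maximal contact with `Red_C(D)`
(non-singular systems are consistent by convention). -/
def IsConsistent (D : PolySys) : Prop :=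
  ∀ x ∈ Sing D, ∃ T, HasMaximalContact (D.red (connectedComponentIn (Sing D) x)) T

/-! ### Fitting and Spivakovsky's invariant -/

/-- The fitting vector `w_Δ(j) = min {σ(j) : σ ∈ Δ}`. -/
noncomputable def fitVec (Δ : Set Vec) : Vec := fun j => sInf ((fun σ => σ j) '' Δ)

/-- The fitting `Δ̃ = Δ - w_Δ`. -/
noncomputable def fitting (Δ : Set Vec) : Set Vec := (fun σ => σ - fitVec Δ) '' Δ

/-- Spivakovsky's invariant `Spi_D = max {δ(Δ̃_J) : J ∈ Sing(D)}`. -/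
noncomputable def spi (D : PolySys) : ℝ :=
  sSup {x | ∃ J ∈ Sing D, contactExp J (fitting (D.Δ J)) = x}

/-- `S(D) = {J ∈ Sing(D) : δ(Δ̃_J) = Spi_D}`. -/
def SSet (D : PolySys) : Set (Finset ℕ) :=
  {J | J ∈ Sing D ∧ contactExp J (fitting (D.Δ J)) = spi D}

/-! ### Moderated transforms, normal crossings, quasi-ordinary systems -/

/-- The polyhedron of the `d`-moderated transform `Θ^d_J(N) = N(Λ_J(N/d))`
at a stratum `J'` of the blow-up. -/
noncomputable def modΔ (N : PolySys) (d : ℕ) (J : Finset ℕ) (inf : ℕ) (J' : Finset ℕ) :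
    Set Vec :=
  if inf ∈ J' then
    (fun σ => σ - (d : ℝ) • eVec inf) ''
      posHull J' (lamMap J J' inf '' N.Δ (blowdown J inf J'))
  else N.Δ J'

/-- `N'` is the `d`-moderated transform `Θ^d_J(N)` of the Newton polyhedra system `N`
centered in a stratum `J` with `δ(N_J) ≥ d`, with new index `inf`. -/
def IsModTransformAt (N N' : PolySys) (d : ℕ) (J : Finset ℕ) (inf : ℕ) : Prop :=
  N.d = 1 ∧ N'.d = 1 ∧ J ∈ N.F.H ∧ (d : ℝ) ≤ contactExp J (N.Δ J) ∧ inf ∉ N.F.I ∧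
  N'.F.I = insert inf N.F.I ∧ N'.F.H = blowupH N.F.H J inf ∧
  ∀ J' ∈ N'.F.H, N'.Δ J' = modΔ N d J inf J'

/-- `N'` is a `d`-moderated transform of `N` centered in `J`. -/
def IsModTransform (N N' : PolySys) (d : ℕ) (J : Finset ℕ) : Prop :=
  ∃ inf, IsModTransformAt N N' d J inf

/-- A Newton polyhedra system has normal crossings if each polyhedron has a
single vertex. -/
def HasNormalCrossings (D : PolySys) : Prop :=
  ∀ J ∈ D.F.H, ∃ σ, D.Δ J = posHull J {σ}

/-- `D` is Hironaka quasi-ordinary: each polyhedron over a singular stratum has a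
single vertex. -/
def IsQuasiOrdinary (D : PolySys) : Prop :=
  ∀ J ∈ Sing D, ∃ σ, D.Δ J = posHull J {σ}

/-! ### Lexicographic order on sequences of naturals -/

/-- Strict lexicographic order on sequences `ℕ → ℕ`. -/
def LexLt (φ ψ : ℕ → ℕ) : Prop := ∃ n, φ n < ψ n ∧ ∀ m < n, φ m = ψ m

/-- A weakly decreasing sequence of naturals. -/
def WeaklyDecr (φ : ℕ → ℕ) : Prop := ∀ n, φ (n + 1) ≤ φ n

/-! Since `inf` lies in no stratum of `F`, `π_J^#` recovers from each stratum of the blow-up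
the stratum `K ∈ H` it was built from; so a stratum of `π_J(F)` comes from `U` exactly when
its image under `π_J^#` lies in `U`. -/

lemma blowdown_of_notMem {J K : Finset ℕ} {inf : ℕ} (hK : inf ∉ K) : blowdown J inf K = K :=
  if_neg hK

lemma blowdown_sdiff_union_union_singleton {J K A : Finset ℕ} {inf : ℕ} (hJK : J ⊆ K)
    (hAJ : A ⊆ J) (hK : inf ∉ K) : blowdown J inf (K \ J ∪ A ∪ {inf}) = K := by
  rw [blowdown, if_pos (by simp)]
  ext x
  simp only [Finset.mem_union, Finset.mem_erase, Finset.mem_sdiff, Finset.mem_singleton]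
  constructor
  · rintro (⟨hxinf, (⟨hxK, -⟩ | hxA) | hx⟩ | hxJ)
    exacts [hxK, hJK (hAJ hxA), absurd hx hxinf, hJK hxJ]
  · intro hxK
    by_cases hxJ : x ∈ J
    · exact Or.inr hxJ
    · exact Or.inl ⟨fun h => hK (h ▸ hxK), Or.inl (Or.inl ⟨hxK, hxJ⟩)⟩

section

variable {H U : Set (Finset ℕ)} {J J' : Finset ℕ} {inf : ℕ}

lemma blowupH_mono (hUH : U ⊆ H) : blowupH U J inf ⊆ blowupH H J inf := by
  rintro J' (⟨hK, hJK⟩ | ⟨K, ⟨hK, hJK⟩, hA⟩)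
  exacts [Or.inl ⟨hUH hK, hJK⟩, Or.inr ⟨K, ⟨hUH hK, hJK⟩, hA⟩]

lemma blowdown_mem_of_mem_blowupH (hinf : ∀ K ∈ H, inf ∉ K) (hJ' : J' ∈ blowupH H J inf) :
    blowdown J inf J' ∈ H := by
  obtain ⟨hK, -⟩ | ⟨K, ⟨hK, hJK⟩, A, hAJ, rfl⟩ := hJ'
  · rwa [blowdown_of_notMem (hinf J' hK)]
  · rwa [blowdown_sdiff_union_union_singleton hJK hAJ.subset (hinf K hK)]

lemma mem_blowupH_of_blowdown_mem (hinf : ∀ K ∈ H, inf ∉ K) (hJ' : J' ∈ blowupH H J inf)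
    (hU : blowdown J inf J' ∈ U) : J' ∈ blowupH U J inf := by
  obtain ⟨hK, hJK⟩ | ⟨K, ⟨hK, hJK⟩, A, hAJ, rfl⟩ := hJ'
  · rw [blowdown_of_notMem (hinf J' hK)] at hU
    exact Or.inl ⟨hU, hJK⟩
  · rw [blowdown_sdiff_union_union_singleton hJK hAJ.subset (hinf K hK)] at hU
    exact Or.inr ⟨K, ⟨hU, hJK⟩, A, hAJ, rfl⟩

lemma blowupH_eq_inter_preimage_blowdown (hUH : U ⊆ H) (hinf : ∀ K ∈ H, inf ∉ K) :
    blowupH U J inf = blowupH H J inf ∩ blowdown J inf ⁻¹' U :=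
  Set.Subset.antisymm
    (fun _ hJ' => ⟨blowupH_mono hUH hJ',
      blowdown_mem_of_mem_blowupH (fun K hK => hinf K (hUH hK)) hJ'⟩)
    (fun _ ⟨hJ', hU⟩ => mem_blowupH_of_blowdown_mem hinf hJ' hU)

end

theorem blowup_restrict_commute_general (F : Fabric) (U : Set (Finset ℕ)) (hUH : U ⊆ F.H)
    (J : Finset ℕ) (inf : ℕ) (hinf : inf ∉ F.I) :
    blowupH U J inf = blowupH F.H J inf ∩ blowdown J inf ⁻¹' U :=
  blowupH_eq_inter_preimage_blowdown hUH fun K hK hiK => hinf (F.mem_sub K hK hiK)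

/-- `π_J(F|_U) = π_J(F)|_{U'}` where `U' = (π_J^#)⁻¹(U)`: blowing-up the
restriction of `F` to a downward-closed `U ⊆ H` yields the restriction of the
blow-up of `F` to the preimage of `U` (the index sets are trivially equal). -/
theorem blowup_restrict_commute (F : Fabric) (U : Set (Finset ℕ)) (hUH : U ⊆ F.H)
    (hUdc : ∀ J ∈ U, ∀ J' ⊆ J, J' ∈ U) (J : Finset ℕ) (hJ : J ∈ U) (hJne : J ≠ ∅)
    (inf : ℕ) (hinf : inf ∉ F.I) :
    blowupH U J inf = blowupH F.H J inf ∩ blowdown J inf ⁻¹' U :=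
  blowup_restrict_commute_general F U hUH J inf hinf

end RedSing
end

section
/- Every Hironaka quasi-ordinary polyhedra system admits a reduction of singularities. -/
open scoped Pointwise

namespace RedSing

/-! On a quasi-ordinary system every singular polyhedron is `Δ_K = [[{σ_K}]]` with `σ_K` a
point of `(1/d)ℤ^K`, and the vertices are compatible under restriction. Blow up a minimal
singular stratum `J` inside a singular stratum `K₀` of maximal contact exponent. The
characteristic transform is again quasi-ordinary: a new stratum `J'` over `K = π_J^#(J')` has
the single vertex `λ_{J'}(σ_K) - e_{J',∞}`, of contact exponent
`δ(Δ_K) + Σ_{J' ∩ J} σ_K - 1 < δ(Δ_K)` because `J' ∩ J ⊊ J` is not singular. Old strata keep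
their polyhedra, and `K₀ ⊇ J` disappears. So the pair (`d · max δ`, number of strata attaining
the maximum) decreases lexicographically, and it is a pair of naturals because the vertices are
lattice points. -/

section Polyhedra

variable {J K : Finset ℕ} {A : Set Vec} {v : Vec}

lemma zero_mem_suppCone (J : Finset ℕ) : (0 : Vec) ∈ suppCone J :=
  ⟨fun _ => le_rfl, fun _ _ => rfl⟩

lemma add_mem_suppCone {ρ τ : Vec} (hρ : ρ ∈ suppCone J) (hτ : τ ∈ suppCone J) :
    ρ + τ ∈ suppCone J :=
  ⟨fun j => add_nonneg (hρ.1 j) (hτ.1 j), fun j hj => by simp [hρ.2 j hj, hτ.2 j hj]⟩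

lemma convex_suppCone (J : Finset ℕ) : Convex ℝ (suppCone J) := by
  intro ρ hρ τ hτ a b ha hb _
  exact ⟨fun j => add_nonneg (mul_nonneg ha (hρ.1 j)) (mul_nonneg hb (hτ.1 j)),
    fun j hj => by simp [hρ.2 j hj, hτ.2 j hj]⟩

lemma suppCone_add_suppCone (J : Finset ℕ) : suppCone J + suppCone J = suppCone J := by
  refine (Set.add_subset_iff.mpr fun _ hρ _ hτ => add_mem_suppCone hρ hτ).antisymm ?_
  exact fun ρ hρ => ⟨ρ, hρ, 0, zero_mem_suppCone J, add_zero ρ⟩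

lemma subset_posHull (J : Finset ℕ) (A : Set Vec) : A ⊆ posHull J A :=
  fun a ha => subset_convexHull ℝ _ ⟨a, ha, 0, zero_mem_suppCone J, add_zero a⟩

lemma posHull_mono {B : Set Vec} (h : A ⊆ B) : posHull J A ⊆ posHull J B :=
  convexHull_mono (Set.add_subset_add_right h)

lemma posHull_add_suppCone (J : Finset ℕ) (A : Set Vec) :
    posHull J A + suppCone J = posHull J A := by
  rw [posHull, ← (convex_suppCone J).convexHull_eq, ← convexHull_add, add_assoc,
    (convex_suppCone J).convexHull_eq, suppCone_add_suppCone]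

lemma posHull_posHull (J : Finset ℕ) (A : Set Vec) : posHull J (posHull J A) = posHull J A := by
  rw [posHull, posHull_add_suppCone, posHull, (convex_convexHull ℝ _).convexHull_eq]

lemma posHull_singleton (J : Finset ℕ) (v : Vec) : posHull J {v} = {v} + suppCone J := by
  rw [posHull, Set.singleton_add]
  exact ((convex_suppCone J).translate v).convexHull_eq

lemma mem_posHull_singleton {τ : Vec} : τ ∈ posHull J {v} ↔ ∃ ρ ∈ suppCone J, v + ρ = τ := by
  rw [posHull_singleton, Set.singleton_add]; rfl

lemma image_posHull (L : Vec →ₗ[ℝ] Vec) (J : Finset ℕ) (A : Set Vec) :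
    L '' posHull J A = convexHull ℝ (L '' A + L '' suppCone J) := by
  rw [posHull, L.image_convexHull, Set.image_add]

lemma posHull_image_posHull (L : Vec →ₗ[ℝ] Vec) (hL : L '' suppCone K ⊆ suppCone J) :
    posHull J (L '' posHull K A) = posHull J (L '' A) := by
  refine subset_antisymm ?_ (posHull_mono (Set.image_mono (subset_posHull K A)))
  conv_rhs => rw [← posHull_posHull]
  refine posHull_mono ?_
  rw [image_posHull]
  exact convexHull_mono (Set.add_subset_add_left hL)

lemma image_sub_posHull (J : Finset ℕ) (A : Set Vec) (e : Vec) :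
    (· - e) '' posHull J A = posHull J ((· - e) '' A) := by
  simp_rw [sub_eq_add_neg, ← Set.add_singleton, posHull, add_right_comm A]
  rw [convexHull_add (A + suppCone J), convexHull_singleton]

lemma mem_extremePoints_posHull_singleton : v ∈ (posHull J {v}).extremePoints ℝ := by
  refine mem_extremePoints_iff_left.mpr ⟨subset_posHull J {v} (Set.mem_singleton v), ?_⟩
  rintro _ hx₁ _ hx₂ ⟨a, b, ha, hb, hab, hv⟩
  obtain ⟨ρ₁, hρ₁, rfl⟩ := mem_posHull_singleton.mp hx₁
  obtain ⟨ρ₂, hρ₂, rfl⟩ := mem_posHull_singleton.mp hx₂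
  funext j
  have hj := congrFun hv j
  simp only [Pi.add_apply, Pi.smul_apply, smul_eq_mul] at hj ⊢
  have h0 : a * ρ₁ j + b * ρ₂ j = 0 := by linear_combination hj - v j * hab
  have : a * ρ₁ j = 0 := by linarith [mul_nonneg ha.le (hρ₁.1 j), mul_nonneg hb.le (hρ₂.1 j)]
  simpa [ha.ne'] using this

lemma mem_of_posHull_eq_posHull_singleton (h : posHull J A = posHull J {v}) : v ∈ A := by
  have hv : v ∈ A + suppCone J :=
    extremePoints_convexHull_subset (h ▸ mem_extremePoints_posHull_singleton)
  obtain ⟨a, ha, ρ, hρ, rfl⟩ := hv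
  obtain ⟨ρ', hρ', hρ'a⟩ := mem_posHull_singleton.mp (h ▸ subset_posHull J A ha)
  convert ha
  funext j
  have := congrFun hρ'a j
  simp only [Pi.add_apply] at this ⊢
  linarith [hρ.1 j, hρ'.1 j]

end Polyhedra

section Restrict

variable {J J₁ J₂ K : Finset ℕ} {A : Set Vec}

def restrict (J : Finset ℕ) : Vec →ₗ[ℝ] Vec where
  toFun σ j := if j ∈ J then σ j else 0
  map_add' σ τ := by ext j; by_cases j ∈ J <;> simp [*]
  map_smul' a σ := by ext j; by_cases j ∈ J <;> simp [*]

lemma restrict_apply (J : Finset ℕ) (σ : Vec) (j : ℕ) :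
    restrict J σ j = if j ∈ J then σ j else 0 := rfl

lemma sum_restrict {σ : Vec} (h : J ⊆ K) : ∑ j ∈ J, restrict K σ j = ∑ j ∈ J, σ j :=
  Finset.sum_congr rfl fun _ hj => if_pos (h hj)

lemma restrict_image_suppCone (h : J₁ ⊆ J₂) : restrict J₁ '' suppCone J₂ = suppCone J₁ := by
  refine subset_antisymm ?_ fun ρ hρ => ⟨ρ, ⟨hρ.1, fun j hj => hρ.2 j (mt (@h j) hj)⟩, ?_⟩
  · rintro _ ⟨ρ, hρ, rfl⟩
    refine ⟨fun j => ?_, fun j hj => if_neg hj⟩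
    rw [restrict_apply]
    split_ifs
    exacts [hρ.1 j, le_rfl]
  · ext j
    rw [restrict_apply]
    split_ifs with hj
    exacts [rfl, (hρ.2 j hj).symm]

lemma restrict_image_posHull (h : J₁ ⊆ J₂) :
    restrict J₁ '' posHull J₂ A = posHull J₁ (restrict J₁ '' A) := by
  rw [image_posHull, restrict_image_suppCone h, posHull]

lemma PolySys.Δ_eq_restrict_image (D : PolySys) (h₁ : J₁ ∈ D.F.H) (h₂ : J₂ ∈ D.F.H)
    (h : J₁ ⊆ J₂) : D.Δ J₁ = restrict J₁ '' D.Δ J₂ :=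
  D.compat J₁ h₁ J₂ h₂ h

end Restrict

section Contact

variable {J J₁ J₂ : Finset ℕ} {d : ℕ} {Δ : Set Vec} {σ v : Vec}

lemma posHull_subset_suppCone {A : Set Vec} (h : A ⊆ suppCone J) : posHull J A ⊆ suppCone J :=
  convexHull_min ((Set.add_subset_add_right h).trans (suppCone_add_suppCone J).subset)
    (convex_suppCone J)

lemma IsCharPoly.subset_suppCone (h : IsCharPoly J d Δ) : Δ ⊆ suppCone J := by
  obtain ⟨A, hA, rfl⟩ := h
  exact posHull_subset_suppCone fun a ha => (hA ha).1

lemma IsCharPoly.posHull_eq (h : IsCharPoly J d Δ) : posHull J Δ = Δ := by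
  obtain ⟨A, -, rfl⟩ := h
  exact posHull_posHull J A

lemma contactExp_le_sum (hΔ : Δ ⊆ suppCone J) (hσ : σ ∈ Δ) : contactExp J Δ ≤ ∑ j ∈ J, σ j := by
  unfold contactExp
  split_ifs
  · exact (Finset.sum_nonneg fun j _ => (hΔ hσ).1 j).trans' (by norm_num)
  · refine csInf_le ⟨0, ?_⟩ ⟨σ, hσ, rfl⟩
    rintro _ ⟨τ, hτ, rfl⟩
    exact Finset.sum_nonneg fun j _ => (hΔ hτ).1 j

lemma contactExp_posHull_singleton (hJ : J ≠ ∅) (v : Vec) :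
    contactExp J (posHull J {v}) = ∑ j ∈ J, v j := by
  rw [contactExp, if_neg hJ]
  refine IsLeast.csInf_eq ⟨⟨v, subset_posHull J {v} rfl, rfl⟩, ?_⟩
  rintro _ ⟨_, hτ, rfl⟩
  obtain ⟨ρ, hρ, rfl⟩ := mem_posHull_singleton.mp hτ
  simpa [Finset.sum_add_distrib] using Finset.sum_nonneg fun j _ => hρ.1 j

lemma ne_empty_of_mem_sing {D : PolySys} (h : J ∈ Sing D) : J ≠ ∅ := by
  rintro rfl
  have := h.2
  rw [contactExp, if_pos rfl] at this
  norm_num at this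

lemma one_le_sum_of_mem_sing {D : PolySys} (h : J ∈ Sing D) (hσ : σ ∈ D.Δ J) :
    1 ≤ ∑ j ∈ J, σ j :=
  h.2.trans (contactExp_le_sum (D.char J h.1).subset_suppCone hσ)

lemma one_le_sum_of_mem_sing_of_subset {D : PolySys} (h₁ : J₁ ∈ Sing D) (h₂ : J₂ ∈ D.F.H)
    (h : J₁ ⊆ J₂) (hσ : σ ∈ D.Δ J₂) : 1 ≤ ∑ j ∈ J₁, σ j := by
  have hσ₁ : restrict J₁ σ ∈ D.Δ J₁ := D.Δ_eq_restrict_image h₁.1 h₂ h ▸ ⟨σ, hσ, rfl⟩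
  simpa only [sum_restrict subset_rfl] using one_le_sum_of_mem_sing h₁ hσ₁

lemma mem_sing_of_subset {D : PolySys} (h₁ : J₁ ∈ Sing D) (h₂ : J₂ ∈ D.F.H) (h : J₁ ⊆ J₂) :
    J₂ ∈ Sing D := by
  refine ⟨h₂, ?_⟩
  have hJ₂ : J₂ ≠ ∅ := fun h' => ne_empty_of_mem_sing h₁ (Finset.subset_empty.mp (h' ▸ h))
  rw [contactExp, if_neg hJ₂]
  obtain ⟨σ, hσ⟩ := D.nonempty J₂ h₂
  refine le_csInf ⟨_, σ, hσ, rfl⟩ ?_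
  rintro _ ⟨τ, hτ, rfl⟩
  exact (one_le_sum_of_mem_sing_of_subset h₁ h₂ h hτ).trans
    (Finset.sum_le_sum_of_subset_of_nonneg h fun j _ _ => ((D.char J₂ h₂).subset_suppCone hτ).1 j)

end Contact

section Blowup

variable {F : Fabric} {J J₁ J₂ J' : Finset ℕ} {inf : ℕ}

lemma blowdown_of_mem (h : inf ∈ J') : blowdown J inf J' = J'.erase inf ∪ J := if_pos h

lemma blowdown_of_notMem_s7 (h : inf ∉ J') : blowdown J inf J' = J' := if_neg h

lemma subset_blowdown (h : inf ∈ J') : J ⊆ blowdown J inf J' := by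
  rw [blowdown_of_mem h]
  exact Finset.subset_union_right

lemma subset_insert_blowdown : J' ⊆ insert inf (blowdown J inf J') := by
  intro j hj
  unfold blowdown
  split_ifs <;> grind

lemma blowdown_mono (h : J₁ ⊆ J₂) : blowdown J inf J₁ ⊆ blowdown J inf J₂ := by
  intro j hj
  unfold blowdown at hj ⊢
  split_ifs at hj ⊢ <;> grind

lemma Fabric.mem_blowupH_iff (hinf : inf ∉ F.I) :
    J' ∈ blowupH F.H J inf ↔ blowdown J inf J' ∈ F.H ∧ ¬J ⊆ J' := by
  constructor
  · rintro (⟨hK, hJK⟩ | ⟨K, ⟨hK, hJK⟩, A, hA, rfl⟩)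
    · rw [blowdown_of_notMem_s7 fun h => hinf (F.mem_sub _ hK h)]
      exact ⟨hK, hJK⟩
    · have hinfK : inf ∉ K := fun h => hinf (F.mem_sub K hK h)
      have hAJ := hA.subset
      have hblow : blowdown J inf (K \ J ∪ A ∪ {inf}) = K := by
        rw [blowdown_of_mem (by simp)]
        ext j
        simp only [Finset.mem_union, Finset.mem_erase, Finset.mem_sdiff, Finset.mem_singleton]
        grind
      refine ⟨hblow.symm ▸ hK, fun hJ => hA.not_subset fun j hj => ?_⟩
      have := hJ hj
      simp only [Finset.mem_union, Finset.mem_sdiff, Finset.mem_singleton] at this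
      grind
  · rintro ⟨hK, hJ⟩
    by_cases hi : inf ∈ J'
    · refine Or.inr ⟨_, ⟨hK, subset_blowdown hi⟩, J' ∩ J,
        Finset.ssubset_iff_subset_ne.mpr ⟨Finset.inter_subset_right, fun h => hJ ?_⟩, ?_⟩
      · exact h ▸ Finset.inter_subset_left
      · rw [blowdown_of_mem hi]
        ext j
        simp only [Finset.mem_union, Finset.mem_erase, Finset.mem_sdiff, Finset.mem_inter,
          Finset.mem_singleton]
        grind
    · rw [blowdown_of_notMem_s7 hi] at hK
      exact Or.inl ⟨hK, hJ⟩

/-- The fabric `π_J(F)`. -/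
def Fabric.blowup (F : Fabric) (J : Finset ℕ) (inf : ℕ) (hinf : inf ∉ F.I) : Fabric where
  I := insert inf F.I
  I_nonempty := Finset.insert_nonempty _ _
  H := blowupH F.H J inf
  mem_sub J' hJ' := subset_insert_blowdown.trans
    (Finset.insert_subset_insert _ (F.mem_sub _ ((F.mem_blowupH_iff hinf).mp hJ').1))
  downward J₂ h₂ J₁ h := by
    rw [F.mem_blowupH_iff hinf] at h₂ ⊢
    exact ⟨F.downward _ h₂.1 _ (blowdown_mono h), fun hJ => h₂.2 (hJ.trans h)⟩

end Blowup

section CharTransform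

variable {D : PolySys} {J J' J₁ J₂ K : Finset ℕ} {inf d : ℕ} {σ : Vec}

noncomputable def lamLinearMap (J J' : Finset ℕ) (inf : ℕ) : Vec →ₗ[ℝ] Vec where
  toFun := lamMap J J' inf
  map_add' σ τ := by
    ext j
    simp only [lamMap, Pi.add_apply, Finset.sum_add_distrib]
    split_ifs <;> simp
  map_smul' a σ := by
    ext j
    simp only [lamMap, Pi.smul_apply, smul_eq_mul, RingHom.id_apply, ← Finset.mul_sum]
    split_ifs <;> simp

lemma coe_lamLinearMap (J J' : Finset ℕ) (inf : ℕ) : ⇑(lamLinearMap J J' inf) = lamMap J J' inf :=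
  rfl

lemma lamMap_image_suppCone_subset (h : inf ∈ J') :
    lamMap J J' inf '' suppCone K ⊆ suppCone J' := by
  rintro _ ⟨ρ, hρ, rfl⟩
  refine ⟨fun j => ?_, fun j hj => ?_⟩
  · unfold lamMap
    split_ifs
    exacts [Finset.sum_nonneg fun i _ => hρ.1 i, hρ.1 j, le_rfl]
  · simp [lamMap, hj, show j ≠ inf by rintro rfl; exact hj h]

lemma restrict_lamMap_of_mem (h : J₁ ⊆ J₂) (hi : inf ∈ J₁) (σ : Vec) :
    restrict J₁ (lamMap J J₂ inf σ) = lamMap J J₁ inf (restrict (blowdown J inf J₁) σ) := by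
  ext j
  rw [restrict_apply, blowdown_of_mem hi]
  simp only [lamMap, sum_restrict Finset.subset_union_right]
  simp only [restrict_apply]
  split_ifs <;> grind

lemma restrict_lamMap_of_notMem (h : J₁ ⊆ J₂) (hi : inf ∉ J₁) (σ : Vec) :
    restrict J₁ (lamMap J J₂ inf σ) = restrict J₁ σ := by
  ext j
  simp only [restrict_apply, lamMap]
  split_ifs <;> grind

lemma restrict_eVec_of_mem (hi : inf ∈ J₁) : restrict J₁ (eVec inf) = eVec inf := by
  ext j
  simp only [restrict_apply, eVec]
  split_ifs <;> grind

lemma restrict_eVec_of_notMem (hi : inf ∉ J₁) : restrict J₁ (eVec inf) = 0 := by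
  ext j
  simp only [restrict_apply, eVec, Pi.zero_apply]
  split_ifs <;> grind

lemma lamMap_sub_eVec_mem_latticePts (hd : 0 < d) (hσ : σ ∈ latticePts K d)
    (hJ : 1 ≤ ∑ i ∈ J, σ i) (hi : inf ∈ J') :
    lamMap J J' inf σ - eVec inf ∈ latticePts J' d := by
  choose m hm using hσ.2
  have hd' : (0 : ℝ) < d := Nat.cast_pos.mpr hd
  have hsum : ∑ i ∈ J, σ i = (∑ i ∈ J, m i : ℕ) / d := by
    push_cast
    rw [Finset.sum_div]
    exact Finset.sum_congr rfl fun i _ => hm i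
  have hdm : d ≤ ∑ i ∈ J, m i := by
    rw [hsum, le_div_iff₀ hd', one_mul] at hJ
    exact_mod_cast hJ
  have hcoord : ∀ j, (lamMap J J' inf σ - eVec inf) j =
      if j = inf then ∑ i ∈ J, σ i - 1 else if j ∈ J' then σ j else 0 := by
    intro j
    simp only [Pi.sub_apply, lamMap, eVec]
    split_ifs <;> ring
  refine ⟨⟨fun j => ?_, fun j hj => ?_⟩, fun j => ?_⟩
  · rw [hcoord]
    split_ifs
    exacts [sub_nonneg.mpr hJ, hσ.1.1 j, le_rfl]
  · rw [hcoord, if_neg (by rintro rfl; exact hj hi), if_neg hj]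
  · rw [hcoord]
    split_ifs
    · refine ⟨∑ i ∈ J, m i - d, ?_⟩
      rw [hsum, Nat.cast_sub hdm]
      field_simp
    · exact ⟨m j, hm j⟩
    · exact ⟨0, by simp⟩

lemma charΔ_of_notMem (hi : inf ∉ J') : charΔ D J inf J' = D.Δ J' := if_neg hi

lemma charΔ_of_mem {A : Set Vec} (hi : inf ∈ J')
    (hA : D.Δ (blowdown J inf J') = posHull (blowdown J inf J') A) :
    charΔ D J inf J' = posHull J' ((fun σ => lamMap J J' inf σ - eVec inf) '' A) := by
  rw [charΔ, if_pos hi, hA, ← coe_lamLinearMap,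
    posHull_image_posHull (lamLinearMap J J' inf) (lamMap_image_suppCone_subset hi),
    image_sub_posHull, Set.image_image]

lemma isCharPoly_charΔ (hJ : J ∈ Sing D) (hinf : inf ∉ D.F.I)
    (hJ' : J' ∈ blowupH D.F.H J inf) : IsCharPoly J' D.d (charΔ D J inf J') := by
  have hK := ((D.F.mem_blowupH_iff hinf).mp hJ').1
  by_cases hi : inf ∈ J'
  · obtain ⟨A, hA, hΔ⟩ := D.char _ hK
    refine ⟨_, ?_, charΔ_of_mem hi hΔ⟩
    rintro _ ⟨σ, hσ, rfl⟩
    exact lamMap_sub_eVec_mem_latticePts D.d_pos (hA hσ)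
      (one_le_sum_of_mem_sing_of_subset hJ hK (subset_blowdown hi)
        (hΔ ▸ subset_posHull _ A hσ)) hi
  · rw [blowdown_of_notMem_s7 hi] at hK
    rw [charΔ_of_notMem hi]
    exact D.char J' hK

lemma charΔ_nonempty (hinf : inf ∉ D.F.I) (hJ' : J' ∈ blowupH D.F.H J inf) :
    (charΔ D J inf J').Nonempty := by
  have hK := ((D.F.mem_blowupH_iff hinf).mp hJ').1
  unfold charΔ
  split_ifs with hi
  · exact (((D.nonempty _ hK).image _).mono (subset_posHull _ _)).image _
  · rw [blowdown_of_notMem_s7 hi] at hK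
    exact D.nonempty J' hK

lemma charΔ_compat (hinf : inf ∉ D.F.I) (hJ₁ : J₁ ∈ blowupH D.F.H J inf)
    (hJ₂ : J₂ ∈ blowupH D.F.H J inf) (h : J₁ ⊆ J₂) :
    charΔ D J inf J₁ = restrict J₁ '' charΔ D J inf J₂ := by
  rw [D.F.mem_blowupH_iff hinf] at hJ₁ hJ₂
  have hK : blowdown J inf J₁ ⊆ blowdown J inf J₂ := blowdown_mono h
  by_cases hi₂ : inf ∈ J₂
  swap
  · have hi₁ : inf ∉ J₁ := fun hi => hi₂ (h hi)
    rw [blowdown_of_notMem_s7 hi₁] at hJ₁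
    rw [blowdown_of_notMem_s7 hi₂] at hJ₂
    rw [charΔ_of_notMem hi₁, charΔ_of_notMem hi₂]
    exact D.compat _ hJ₁.1 _ hJ₂.1 h
  rw [show charΔ D J inf J₂ = _ from if_pos hi₂, Set.image_image]
  by_cases hi₁ : inf ∈ J₁
  · simp only [map_sub, restrict_eVec_of_mem hi₁]
    rw [← Set.image_image (· - eVec inf) (restrict J₁), restrict_image_posHull h, Set.image_image]
    simp only [restrict_lamMap_of_mem h hi₁]
    rw [← Set.image_image (lamMap J J₁ inf) (restrict _), ← D.Δ_eq_restrict_image hJ₁.1 hJ₂.1 hK,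
      charΔ, if_pos hi₁]
  · simp only [map_sub, restrict_eVec_of_notMem hi₁, sub_zero]
    rw [restrict_image_posHull h, Set.image_image]
    simp only [restrict_lamMap_of_notMem h hi₁]
    rw [blowdown_of_notMem_s7 hi₁] at hJ₁ hK
    rw [← D.Δ_eq_restrict_image hJ₁.1 hJ₂.1 hK, (D.char _ hJ₁.1).posHull_eq, charΔ_of_notMem hi₁]

/-- The characteristic transform `Λ_J(D)`. -/
noncomputable def PolySys.charTransform (D : PolySys) (J : Finset ℕ) (inf : ℕ)
    (hJ : J ∈ Sing D) (hinf : inf ∉ D.F.I) : PolySys where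
  F := D.F.blowup J inf hinf
  d := D.d
  d_pos := D.d_pos
  Δ := charΔ D J inf
  char _ hJ' := isCharPoly_charΔ hJ hinf hJ'
  nonempty _ hJ' := charΔ_nonempty hinf hJ'
  compat _ hJ₁ _ hJ₂ h := charΔ_compat hinf hJ₁ hJ₂ h

lemma PolySys.isCharTransform_charTransform (hJ : J ∈ Sing D) (hinf : inf ∉ D.F.I) :
    IsCharTransform D (D.charTransform J inf hJ hinf) J :=
  ⟨inf, hJ, rfl, hinf, rfl, rfl, fun _ _ => rfl⟩

lemma blowdown_mem_sing (hJ : J ∈ Sing D) (hinf : inf ∉ D.F.I) (hJ' : J' ∈ blowupH D.F.H J inf)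
    (hi : inf ∈ J') : blowdown J inf J' ∈ Sing D :=
  mem_sing_of_subset hJ ((D.F.mem_blowupH_iff hinf).mp hJ').1 (subset_blowdown hi)

lemma mem_sing_of_mem_sing_charTransform {hJ : J ∈ Sing D} {hinf : inf ∉ D.F.I} (hi : inf ∉ J')
    (h : J' ∈ Sing (D.charTransform J inf hJ hinf)) : J' ∈ Sing D ∧ ¬J ⊆ J' := by
  have h' := (D.F.mem_blowupH_iff hinf).mp h.1
  rw [blowdown_of_notMem_s7 hi] at h'
  exact ⟨⟨h'.1, charΔ_of_notMem (D := D) hi ▸ h.2⟩, h'.2⟩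

end CharTransform

section QuasiOrdinary

variable {D : PolySys} {J J' K A : Finset ℕ} {inf : ℕ}

/-- The vertex `σ_K` of `Δ_K = [[{σ_K}]]` (junk when `Δ_K` is not of this form). -/
noncomputable def vertex (D : PolySys) (K : Finset ℕ) : Vec :=
  Classical.epsilon fun v => D.Δ K = posHull K {v}

namespace IsQuasiOrdinary

variable (hD : IsQuasiOrdinary D)
include hD

lemma Δ_eq (hK : K ∈ Sing D) : D.Δ K = posHull K {vertex D K} :=
  Classical.epsilon_spec (hD K hK)

lemma vertex_mem_latticePts (hK : K ∈ Sing D) : vertex D K ∈ latticePts K D.d := by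
  obtain ⟨A, hA, hΔ⟩ := D.char K hK.1
  exact hA (mem_of_posHull_eq_posHull_singleton (hΔ.symm.trans (hD.Δ_eq hK)))

lemma contactExp_eq_sum_vertex (hK : K ∈ Sing D) (hA : A ∈ D.F.H) (hAK : A ⊆ K) (hA₀ : A ≠ ∅) :
    contactExp A (D.Δ A) = ∑ j ∈ A, vertex D K j := by
  rw [D.Δ_eq_restrict_image hA hK.1 hAK, hD.Δ_eq hK, restrict_image_posHull hAK,
    Set.image_singleton, contactExp_posHull_singleton hA₀, sum_restrict subset_rfl]

lemma sum_vertex_lt_one (hK : K ∈ Sing D) (hA : A ∈ D.F.H) (hAK : A ⊆ K) (hAs : A ∉ Sing D) :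
    ∑ j ∈ A, vertex D K j < 1 := by
  rcases eq_or_ne A ∅ with rfl | hA₀
  · simp
  · rw [← hD.contactExp_eq_sum_vertex hK hA hAK hA₀]
    exact not_le.mp fun h => hAs ⟨hA, h⟩

lemma exists_natCast_eq_mul_contactExp (hK : K ∈ Sing D) :
    ∃ n : ℕ, D.d * contactExp K (D.Δ K) = n := by
  choose m hm using (hD.vertex_mem_latticePts hK).2
  refine ⟨∑ j ∈ K, m j, ?_⟩
  rw [hD.contactExp_eq_sum_vertex hK hK.1 subset_rfl (ne_empty_of_mem_sing hK), Finset.mul_sum]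
  push_cast
  refine Finset.sum_congr rfl fun j _ => ?_
  rw [hm j]
  field_simp [D.d_pos.ne']

lemma charTransform (hJ : J ∈ Sing D) (hinf : inf ∉ D.F.I) :
    IsQuasiOrdinary (D.charTransform J inf hJ hinf) := by
  rintro J' ⟨hJ', h⟩
  by_cases hi : inf ∈ J'
  · refine ⟨lamMap J J' inf (vertex D (blowdown J inf J')) - eVec inf, ?_⟩
    change charΔ D J inf J' = _
    rw [charΔ_of_mem hi (hD.Δ_eq (blowdown_mem_sing hJ hinf hJ' hi)), Set.image_singleton]
  · have hJ's := (mem_sing_of_mem_sing_charTransform hi ⟨hJ', h⟩).1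
    change ∃ σ, charΔ D J inf J' = posHull J' {σ}
    rw [charΔ_of_notMem hi]
    exact hD J' hJ's

lemma contactExp_charTransform_lt (hJ : Minimal (· ∈ Sing D) J) (hinf : inf ∉ D.F.I)
    (hJ' : J' ∈ blowupH D.F.H J inf) (hi : inf ∈ J') :
    contactExp J' ((D.charTransform J inf hJ.prop hinf).Δ J') <
      contactExp (blowdown J inf J') (D.Δ (blowdown J inf J')) := by
  set K := blowdown J inf J' with hK_def
  set v := vertex D K
  have hK : K ∈ Sing D := blowdown_mem_sing hJ.prop hinf hJ' hi
  have hAJ : J'.erase inf ∩ J < J := by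
    refine Finset.ssubset_iff_subset_ne.mpr ⟨Finset.inter_subset_right, fun h => ?_⟩
    exact ((D.F.mem_blowupH_iff hinf).mp hJ').2
      (h ▸ Finset.inter_subset_left.trans (Finset.erase_subset _ _))
  have hA : ∑ j ∈ J'.erase inf ∩ J, v j < 1 :=
    hD.sum_vertex_lt_one hK (D.F.downward J hJ.prop.1 _ hAJ.le)
      (hAJ.le.trans (subset_blowdown hi)) (hJ.not_prop_of_lt hAJ)
  have hJ'_sum : ∑ j ∈ J', (lamMap J J' inf v - eVec inf) j =
      ∑ j ∈ J, v j - 1 + ∑ j ∈ J'.erase inf, v j := by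
    rw [← Finset.add_sum_erase _ _ hi]
    congr 1
    · simp [lamMap, eVec]
    · refine Finset.sum_congr rfl fun j hj => ?_
      simp [lamMap, eVec, Finset.ne_of_mem_erase hj, Finset.mem_of_mem_erase hj]
  have hK_sum : ∑ j ∈ K, v j + ∑ j ∈ J'.erase inf ∩ J, v j =
      ∑ j ∈ J'.erase inf, v j + ∑ j ∈ J, v j := by
    rw [hK_def, blowdown_of_mem hi]
    exact Finset.sum_union_inter
  change contactExp J' (charΔ D J inf J') < _
  rw [charΔ_of_mem hi (hD.Δ_eq hK), Set.image_singleton,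
    contactExp_posHull_singleton (Finset.ne_empty_of_mem hi),
    hD.contactExp_eq_sum_vertex hK hK.1 subset_rfl (ne_empty_of_mem_sing hK)]
  linarith

end IsQuasiOrdinary

end QuasiOrdinary

section Descent

variable {D D' : PolySys} {J K₀ : Finset ℕ}

lemma finite_sing (D : PolySys) : (Sing D).Finite :=
  D.F.I.powerset.finite_toSet.subset fun J hJ => Finset.mem_powerset.mpr (D.F.mem_sub J hJ.1)

noncomputable def maxContact (D : PolySys) : ℝ :=
  sSup ((fun J => contactExp J (D.Δ J)) '' Sing D)

def maxContactStrata (D : PolySys) : Set (Finset ℕ) :=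
  {J | J ∈ Sing D ∧ contactExp J (D.Δ J) = maxContact D}

/-- For quasi-ordinary `D` the floor loses nothing: `D.d * maxContact D` is a natural number. -/
noncomputable def reductionMeasure (D : PolySys) : ℕ ×ₗ ℕ :=
  toLex (⌊D.d * maxContact D⌋₊, (maxContactStrata D).ncard)

lemma contactExp_le_maxContact (hJ : J ∈ Sing D) : contactExp J (D.Δ J) ≤ maxContact D :=
  le_csSup ((finite_sing D).image _).bddAbove ⟨J, hJ, rfl⟩

lemma maxContactStrata_nonempty (h : (Sing D).Nonempty) : (maxContactStrata D).Nonempty := by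
  obtain ⟨J, hJ, hJmax⟩ := (h.image fun J => contactExp J (D.Δ J)).csSup_mem
    ((finite_sing D).image _)
  exact ⟨J, hJ, hJmax⟩

lemma reductionMeasure_lt (hD : IsQuasiOrdinary D) (hK₀ : K₀ ∈ maxContactStrata D)
    (hd : D'.d = D.d)
    (h : ∀ J ∈ Sing D', contactExp J (D'.Δ J) < maxContact D ∨
      J ∈ Sing D ∧ J ≠ K₀ ∧ contactExp J (D'.Δ J) = contactExp J (D.Δ J)) :
    reductionMeasure D' < reductionMeasure D := by
  obtain ⟨hK₀s, hK₀max⟩ := hK₀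
  obtain ⟨n, hn⟩ := hD.exists_natCast_eq_mul_contactExp hK₀s
  rw [hK₀max] at hn
  have hn₀ : n ≠ 0 := by
    have : (1 : ℝ) ≤ n := hn ▸ one_le_mul_of_one_le_of_one_le
      (Nat.one_le_cast.mpr D.d_pos) (hK₀max ▸ hK₀s.2)
    exact Nat.one_le_iff_ne_zero.mp (Nat.one_le_cast.mp this)
  have hle : maxContact D' ≤ maxContact D := by
    rcases (Sing D').eq_empty_or_nonempty with h₀ | hne
    · rw [maxContact, h₀, Set.image_empty, Real.sSup_empty, ← hK₀max]
      linarith [hK₀s.2]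
    · refine csSup_le (hne.image _) ?_
      rintro _ ⟨J, hJ, rfl⟩
      rcases h J hJ with hlt | ⟨hJs, -, hJeq⟩
      · exact hlt.le
      · exact hJeq.trans_le (contactExp_le_maxContact hJs)
  rw [reductionMeasure, reductionMeasure, Prod.Lex.toLex_lt_toLex, hd, hn, Nat.floor_natCast]
  rcases hle.lt_or_eq with hlt | hmax
  · left
    rw [Nat.floor_lt' hn₀, ← hn]
    exact mul_lt_mul_of_pos_left hlt (Nat.cast_pos.mpr D.d_pos)
  · refine Or.inr ⟨by rw [hmax, hn, Nat.floor_natCast], Set.ncard_lt_ncard ⟨?_, fun hsub => ?_⟩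
      ((finite_sing D).subset fun _ h => h.1)⟩
    · rintro J ⟨hJ, hJmax⟩
      rcases h J hJ with hlt | ⟨hJs, -, hJeq⟩
      · exact absurd (hmax ▸ hJmax ▸ hlt) (lt_irrefl _)
      · exact ⟨hJs, hJeq ▸ hJmax.trans hmax⟩
    · obtain ⟨hK₀', hK₀max'⟩ := hsub ⟨hK₀s, hK₀max⟩
      rcases h K₀ hK₀' with hlt | ⟨-, hne, -⟩
      · linarith
      · exact hne rfl

lemma IsQuasiOrdinary.exists_charTransform_lt (hD : IsQuasiOrdinary D) (hne : (Sing D).Nonempty) :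
    ∃ D' J, IsCharTransform D D' J ∧ IsQuasiOrdinary D' ∧
      reductionMeasure D' < reductionMeasure D := by
  obtain ⟨K₀, hK₀⟩ := maxContactStrata_nonempty hne
  obtain ⟨J, hJK₀, hJ⟩ := exists_minimal_le_of_wellFoundedLT (· ∈ Sing D) K₀ hK₀.1
  obtain ⟨inf, hinf⟩ := Infinite.exists_notMem_finset D.F.I
  refine ⟨D.charTransform J inf hJ.prop hinf, J, D.isCharTransform_charTransform hJ.prop hinf,
    hD.charTransform hJ.prop hinf, reductionMeasure_lt hD hK₀ rfl fun J' hJ' => ?_⟩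
  by_cases hi : inf ∈ J'
  · exact Or.inl ((hD.contactExp_charTransform_lt hJ hinf hJ'.1 hi).trans_le
      (contactExp_le_maxContact (blowdown_mem_sing hJ.prop hinf hJ'.1 hi)))
  · obtain ⟨hJ's, hJJ'⟩ := mem_sing_of_mem_sing_charTransform hi hJ'
    exact Or.inr ⟨hJ's, fun h => hJJ' (h ▸ hJK₀), congrArg _ (charΔ_of_notMem hi)⟩

end Descent

lemma hasReduction_of_sing_eq_empty {D : PolySys} (h : Sing D = ∅) : HasReduction D :=
  ⟨0, fun _ => D, rfl, fun _ hi => absurd hi (Nat.not_lt_zero _), h⟩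

lemma HasReduction.of_isCharTransform {D D' : PolySys} {J : Finset ℕ}
    (hD' : IsCharTransform D D' J) (h : HasReduction D') : HasReduction D := by
  obtain ⟨k, seq, rfl, hseq, hk⟩ := h
  refine ⟨k + 1, fun | 0 => D | i + 1 => seq i, rfl, fun i hi => ?_, hk⟩
  cases i with
  | zero => exact ⟨J, hD'⟩
  | succ i => exact hseq i (Nat.succ_lt_succ_iff.mp hi)

/-- Every Hironaka quasi-ordinary polyhedra system admits a reduction of
singularities. -/
theorem quasi_ordinary_reduction (D : PolySys) (h : IsQuasiOrdinary D) :
    HasReduction D := by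
  suffices ∀ μ, ∀ D : PolySys, IsQuasiOrdinary D → reductionMeasure D = μ → HasReduction D from
    this _ D h rfl
  intro μ
  induction μ using WellFoundedLT.induction with
  | _ μ ih =>
    rintro D hD rfl
    rcases (Sing D).eq_empty_or_nonempty with hS | hS
    · exact hasReduction_of_sing_eq_empty hS
    · obtain ⟨D', J, hD', hQO', hlt⟩ := hD.exists_charTransform_lt hS
      exact (ih _ hlt D' hQO' rfl).of_isCharTransform hD'

end RedSing
end
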